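/- (Welch's higher-order bound) Let d, n, t be positive integers with n > d ≥ 2, and let Φ = (φ_1, …, φ_n) be any family of unit vectors in ℂ^d. Then μ(Φ)^{2t} ≥ (1/(n−1)) · (n / C(d+t−1, t) − 1), where C(d+t−1, t) denotes the binomial coefficient. -/

import Mathlib

/-!
Put `ψ_j = φ_j ^ {⊗t}` in the symmetric power `Sym^t ℂ^d`, whose dimension is
`D = C(d+t−1, t)`; then `‖ψ_j‖ = 1` and `⟨ψ_j, ψ_k⟩ = ⟨φ_j, φ_k⟩ ^ t`. For vectors in a
`D`-dimensional space the frame potential `∑_{j,k} |⟨ψ_j, ψ_k⟩|²` is the squared Frobenius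
norm of the frame operator `S = ∑_j ψ_j ψ_jᴴ`, hence at least `(tr S)² / D = n² / D`.
Bounding the `n(n−1)` off-diagonal terms by `μ^{2t}` gives `n² / D ≤ n + n(n−1) μ^{2t}`.
-/

/-- The coherence of a family of vectors `Φ` in `𝕜^d`:
`μ(Φ) = max_{j ≠ k} |⟨φ_j, φ_k⟩|` (equal to the max over `j < k` by symmetry),
with the convention that the coherence of a single vector is `0`. -/
noncomputable def coherence {𝕜 : Type*} [RCLike 𝕜] {d n : ℕ}
    (Φ : Fin n → EuclideanSpace 𝕜 (Fin d)) : ℝ :=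
  ((Finset.univ.filter fun p : Fin n × Fin n => p.1 ≠ p.2).sup
    fun p => ‖(inner 𝕜 (Φ p.1) (Φ p.2) : 𝕜)‖₊ : NNReal)

open Matrix
open scoped InnerProductSpace

namespace Matrix

variable {𝕜 m n : Type*} [RCLike 𝕜] [Fintype m] [Fintype n]

theorem sum_norm_sq_eq_re_trace_mul_conjTranspose (A : Matrix m n 𝕜) :
    ∑ i, ∑ j, ‖A i j‖ ^ 2 = RCLike.re (A * Aᴴ).trace := by
  simp only [trace, diag_apply, mul_apply, conjTranspose_apply, RCLike.star_def,
    RCLike.mul_conj, map_sum]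
  norm_cast

theorem sum_norm_sq_mul_conjTranspose_self (A : Matrix m n 𝕜) :
    ∑ i, ∑ j, ‖(A * Aᴴ) i j‖ ^ 2 = ∑ i, ∑ j, ‖(Aᴴ * A) i j‖ ^ 2 := by
  simp only [sum_norm_sq_eq_re_trace_mul_conjTranspose, conjTranspose_mul,
    conjTranspose_conjTranspose, Matrix.mul_assoc]
  rw [trace_mul_comm A]
  simp only [Matrix.mul_assoc]

end Matrix

theorem sq_sum_norm_sq_le_card_mul_sum_norm_inner_sq {𝕜 ι κ : Type*} [RCLike 𝕜]
    [Fintype ι] [Fintype κ] (v : ι → EuclideanSpace 𝕜 κ) :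
    (∑ j, ‖v j‖ ^ 2) ^ 2 ≤ Fintype.card κ * ∑ j, ∑ k, ‖⟪v j, v k⟫_𝕜‖ ^ 2 := by
  set V : Matrix ι κ 𝕜 := Matrix.of fun j a => v j a
  set s : κ → ℝ := fun a => ∑ j, ‖v j a‖ ^ 2
  have gram : ∀ j k, ‖(V * Vᴴ) j k‖ = ‖⟪v j, v k⟫_𝕜‖ := by
    intro j k
    rw [← RCLike.norm_conj, PiLp.inner_apply]
    simp [V, mul_apply, RCLike.inner_apply, mul_comm]
  have frame_diag : ∀ a, ‖(Vᴴ * V) a a‖ = s a := by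
    intro a
    simp only [V, s, mul_apply, conjTranspose_apply, of_apply, RCLike.star_def, RCLike.conj_mul]
    norm_cast
    exact Real.norm_of_nonneg (by positivity)
  have trace_eq : ∑ j, ‖v j‖ ^ 2 = ∑ a, s a := by
    simp only [s, EuclideanSpace.norm_sq_eq]
    exact Finset.sum_comm
  calc (∑ j, ‖v j‖ ^ 2) ^ 2 = (∑ a, s a) ^ 2 := by rw [trace_eq]
    _ ≤ Fintype.card κ * ∑ a, s a ^ 2 := sq_sum_le_card_mul_sum_sq
    _ ≤ Fintype.card κ * ∑ a, ∑ b, ‖(Vᴴ * V) a b‖ ^ 2 := by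
      gcongr with a
      rw [← frame_diag]
      exact Finset.single_le_sum (f := fun b => ‖(Vᴴ * V) a b‖ ^ 2) (fun _ _ => by positivity)
        (Finset.mem_univ a)
    _ = Fintype.card κ * ∑ j, ∑ k, ‖⟪v j, v k⟫_𝕜‖ ^ 2 := by
      simp only [← sum_norm_sq_mul_conjTranspose_self, gram]

section SymTensorPow

variable {𝕜 ι : Type*} [RCLike 𝕜] [Fintype ι] [DecidableEq ι]

/-- The weights `√(countPerms m)` turn the multinomial expansion of `⟪x, y⟫ ^ t` into an inner
product. -/
noncomputable def symTensorPow (t : ℕ) (x : EuclideanSpace 𝕜 ι) : EuclideanSpace 𝕜 (Sym ι t) :=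
  WithLp.toLp 2 fun m => (√(m.1.countPerms : ℝ) : 𝕜) * (m.1.map x).prod

theorem inner_symTensorPow (t : ℕ) (x y : EuclideanSpace 𝕜 ι) :
    ⟪symTensorPow t x, symTensorPow t y⟫_𝕜 = ⟪x, y⟫_𝕜 ^ t := by
  simp only [PiLp.inner_apply, RCLike.inner_apply, Finset.sum_pow, Finset.sym_univ]
  refine Fintype.sum_congr _ _ fun m => ?_
  simp only [symTensorPow, map_mul, RCLike.conj_ofReal, map_multiset_prod, Multiset.map_map]
  rw [mul_mul_mul_comm, ← Multiset.prod_map_mul, ← RCLike.ofReal_mul,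
    Real.mul_self_sqrt (Nat.cast_nonneg _), RCLike.ofReal_natCast]
  rfl

theorem norm_symTensorPow (t : ℕ) (x : EuclideanSpace 𝕜 ι) :
    ‖symTensorPow t x‖ = ‖x‖ ^ t := by
  have h := inner_symTensorPow t x x
  rw [inner_self_eq_norm_sq_to_K, inner_self_eq_norm_sq_to_K, ← pow_mul, mul_comm, pow_mul]
    at h
  rw [← pow_left_inj₀ (norm_nonneg _) (by positivity) two_ne_zero]
  exact_mod_cast h

end SymTensorPow

section Coherence

variable {𝕜 : Type*} [RCLike 𝕜] {d n : ℕ} (Φ : Fin n → EuclideanSpace 𝕜 (Fin d))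

theorem coherence_nonneg : 0 ≤ coherence Φ := NNReal.coe_nonneg _

theorem norm_inner_le_coherence {j k : Fin n} (hjk : j ≠ k) :
    ‖⟪Φ j, Φ k⟫_𝕜‖ ≤ coherence Φ := by
  have := Finset.le_sup (b := (j, k)) (f := fun p : Fin n × Fin n => ‖⟪Φ p.1, Φ p.2⟫_𝕜‖₊)
    (s := Finset.univ.filter fun p : Fin n × Fin n => p.1 ≠ p.2) (by simpa using hjk)
  exact_mod_cast this

theorem sum_sum_norm_inner_pow_le (hunit : ∀ j, ‖Φ j‖ = 1) (p : ℕ) :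
    ∑ j, ∑ k, ‖⟪Φ j, Φ k⟫_𝕜‖ ^ p ≤ n * (1 + (n - 1) * coherence Φ ^ p) := by
  calc ∑ j, ∑ k, ‖⟪Φ j, Φ k⟫_𝕜‖ ^ p
      = ∑ j, (1 + ∑ k ∈ Finset.univ.erase j, ‖⟪Φ j, Φ k⟫_𝕜‖ ^ p) := by
        refine Fintype.sum_congr _ _ fun j => ?_
        rw [← Finset.add_sum_erase _ _ (Finset.mem_univ j), inner_self_eq_norm_sq_to_K, hunit]
        simp
    _ ≤ ∑ j : Fin n, (1 + ∑ k ∈ Finset.univ.erase j, coherence Φ ^ p) := by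
        gcongr with j _ k hk
        exact norm_inner_le_coherence Φ (Finset.ne_of_mem_erase hk).symm
    _ = n * (1 + (n - 1) * coherence Φ ^ p) := by
        obtain _ | n := n
        · simp
        simp only [Finset.sum_const, Finset.card_erase_of_mem (Finset.mem_univ _),
          Finset.card_univ, Fintype.card_fin, nsmul_eq_mul]
        push_cast
        ring

end Coherence

theorem le_of_sq_le_mul_mul_one_add {n D x : ℝ} (hn : 1 ≤ n) (hD : 0 ≤ D) (hx : 0 ≤ x)
    (h : n ^ 2 ≤ D * (n * (1 + (n - 1) * x))) : 1 / (n - 1) * (n / D - 1) ≤ x := by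
  rcases hn.eq_or_lt with rfl | hn
  · simpa
  rw [one_div, inv_mul_le_iff₀ (by linarith)]
  rcases hD.eq_or_lt with rfl | hD
  · rw [div_zero, zero_sub]
    nlinarith
  rw [div_sub_one hD.ne', div_le_iff₀ hD]
  nlinarith

theorem welch_higher_order_bound_general {d n t : ℕ} (hn : d < n)
    (Φ : Fin n → EuclideanSpace ℂ (Fin d))
    (hunit : ∀ j, ‖Φ j‖ = 1) :
    (1 / ((n : ℝ) - 1)) * ((n : ℝ) / (Nat.choose (d + t - 1) t : ℝ) - 1)
      ≤ coherence Φ ^ (2 * t) := by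
  have frame := sq_sum_norm_sq_le_card_mul_sum_norm_inner_sq fun j => symTensorPow t (Φ j)
  simp only [norm_symTensorPow, hunit, one_pow, inner_symTensorPow, norm_pow, ← pow_mul,
    Sym.card_sym_eq_choose, Fintype.card_fin, Finset.sum_const, Finset.card_univ,
    nsmul_eq_mul, mul_one] at frame
  refine le_of_sq_le_mul_mul_one_add (by exact_mod_cast hn.pos) (Nat.cast_nonneg _)
    (pow_nonneg (coherence_nonneg Φ) _) (frame.trans ?_)
  rw [mul_comm 2 t]
  gcongr
  exact sum_sum_norm_inner_pow_le Φ hunit _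

/-- Welch's higher-order bound: any `n > d ≥ 2` unit vectors in `ℂ^d` satisfy
`μ(Φ)^(2t) ≥ (1/(n−1)) (n/C(d+t−1, t) − 1)` for every positive integer `t`. -/
theorem welch_higher_order_bound {d n t : ℕ} (hd : 2 ≤ d) (hn : d < n) (ht : 0 < t)
    (Φ : Fin n → EuclideanSpace ℂ (Fin d))
    (hunit : ∀ j, ‖Φ j‖ = 1) :
    (1 / ((n : ℝ) - 1)) * ((n : ℝ) / (Nat.choose (d + t - 1) t : ℝ) - 1)
      ≤ coherence Φ ^ (2 * t) :=
  welch_higher_order_bound_general hn Φ hunit
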